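/- Let Y = ⊕_{i∈I} ℚ be a direct sum of copies of ℚ over a linearly ordered index set I. If u, v ∈ Y satisfy that 2u, 2v, and u + v all have the same profile (the ordered finite sequence of nonzero coordinates), then u = v. -/

import Mathlib

/-!
The sum of squares `q w = ∑ i, w i ^ 2` can be read off the profile of `w`. The hypotheses give
`q (2u) = q (2v) = q (u + v)`, that is `4 q u = 4 q v = q (u + v)`, and then the parallelogram law
`q (u + v) + q (u - v) = 2 q u + 2 q v` forces `q (u - v) = 0`, hence `u = v`.
-/

/-- The profile of an element of `⊕_{i ∈ I} ℚ`: its nonzero coordinates in increasing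
order of index. -/
noncomputable def profileQ {I : Type*} [LinearOrder I] (u : I →₀ ℚ) : List ℚ :=
  letI := Classical.decEq I
  (u.support.sort (· ≤ ·)).map u

lemma sum_map_profileQ {I M : Type*} [LinearOrder I] [AddCommMonoid M] (w : I →₀ ℚ)
    (f : ℚ → M) : ((profileQ w).map f).sum = w.sum fun _ a => f a := by
  rw [profileQ, List.map_map, ← Multiset.sum_coe, ← Multiset.map_coe, Finset.sort_eq]
  rfl

section SumSq

variable {ι K : Type*} [CommRing K]

def sumSq (w : ι →₀ K) : K := w.sum fun _ a => a ^ 2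

lemma sumSq_eq_sum_of_support_subset (w : ι →₀ K) {s : Finset ι} (hs : w.support ⊆ s) :
    sumSq w = ∑ i ∈ s, w i ^ 2 :=
  Finsupp.sum_of_support_subset w hs _ fun _ _ => zero_pow two_ne_zero

lemma sumSq_nsmul (n : ℕ) (w : ι →₀ K) : sumSq (n • w) = n ^ 2 * sumSq w := by
  rw [sumSq, Finsupp.sum_smul_index' fun _ => zero_pow two_ne_zero, sumSq, Finsupp.mul_sum]
  simp only [nsmul_eq_mul, mul_pow]

lemma sumSq_add_add_sumSq_sub (u v : ι →₀ K) :
    sumSq (u + v) + sumSq (u - v) = 2 * sumSq u + 2 * sumSq v := by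
  classical
  rw [sumSq_eq_sum_of_support_subset (u + v) Finsupp.support_add,
    sumSq_eq_sum_of_support_subset (u - v) Finsupp.support_sub,
    sumSq_eq_sum_of_support_subset u Finset.subset_union_left,
    sumSq_eq_sum_of_support_subset v Finset.subset_union_right,
    Finset.mul_sum, Finset.mul_sum, ← Finset.sum_add_distrib, ← Finset.sum_add_distrib]
  refine Finset.sum_congr rfl fun i _ => ?_
  simp only [Finsupp.add_apply, Finsupp.sub_apply]
  ring

variable [LinearOrder K] [IsStrictOrderedRing K]

lemma sumSq_eq_zero_iff {w : ι →₀ K} : sumSq w = 0 ↔ w = 0 := by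
  refine ⟨fun h => ?_, fun h => by simp [h, sumSq]⟩
  rw [sumSq, Finsupp.sum, Finset.sum_eq_zero_iff_of_nonneg fun i _ => sq_nonneg (w i)] at h
  ext i
  by_contra hi
  exact hi <| (pow_eq_zero_iff two_ne_zero).mp (h i (Finsupp.mem_support_iff.mpr hi))

theorem eq_of_sumSq_two_nsmul_eq {u v : ι →₀ K} (h1 : sumSq (2 • u) = sumSq (2 • v))
    (h2 : sumSq (2 • v) = sumSq (u + v)) : u = v := by
  have hpar := sumSq_add_add_sumSq_sub u v
  simp only [sumSq_nsmul] at h1 h2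
  push_cast at h1 h2
  have hsub : sumSq (u - v) = 0 := by linarith
  exact sub_eq_zero.mp (sumSq_eq_zero_iff.mp hsub)

end SumSq

/-- in a direct sum of copies of `ℚ`, if `2u`, `2v`, `u + v` all have the
same profile then `u = v`. -/
theorem stmt_16 {I : Type*} [LinearOrder I] (u v : I →₀ ℚ)
    (h1 : profileQ ((2 : ℕ) • u) = profileQ ((2 : ℕ) • v))
    (h2 : profileQ ((2 : ℕ) • v) = profileQ (u + v)) :
    u = v := by
  have sumSq_eq_profileQ (w : I →₀ ℚ) : sumSq w = ((profileQ w).map (· ^ 2)).sum :=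
    (sum_map_profileQ w _).symm
  refine eq_of_sumSq_two_nsmul_eq ?_ ?_
  · rw [sumSq_eq_profileQ, sumSq_eq_profileQ, h1]
  · rw [sumSq_eq_profileQ, sumSq_eq_profileQ, h2]
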